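/- Let N be a proper relational model with equivalence relations R_a, and let M_N be the induced simplicial model with valuation L_N(P) = f[v(P)]. Then for every epistemic formula φ (built from atoms, ⊥, →, and K_a) and every world w, N,w ⊨ φ if and only if M_N, f(w) ⊨ φ. -/
import Mathlib


variable {W Ag : Type}

/-- The `R_a`-equivalence class `[w]_a` of a world `w`. -/
def eqCls (R : Ag → W → W → Prop) (a : Ag) (w : W) : Set W := {w' | R a w w'}

/-- A node of the induced simplicial frame: a pair `([w]_a, a)`. -/
def IsNode (R : Ag → W → W → Prop) (n : Set W × Ag) : Prop :=
  ∃ w, n.1 = eqCls R n.2 w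

/-- The induced simplicial complex `S_N`: faces are sets of nodes whose
associated equivalence classes have nonempty common intersection. -/
def SN (R : Ag → W → W → Prop) : Set (Set (Set W × Ag)) :=
  {F | (∀ n ∈ F, IsNode R n) ∧ (⋂ n ∈ F, n.1).Nonempty}

/-- `X` is a facet (inclusion-maximal face) of the complex `C`. -/
def IsFacetOf (C : Set (Set (Set W × Ag))) (X : Set (Set W × Ag)) : Prop :=
  X ∈ C ∧ ∀ Y ∈ C, X ⊆ Y → Y = X

/-- `f(w) = {([w]_a, a) : a ∈ Ag}`. -/
def fMap (R : Ag → W → W → Prop) (w : W) : Set (Set W × Ag) :=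
  Set.range fun a => (eqCls R a w, a)

/-- Epistemic formulas: atoms, ⊥, →, K_a. -/
inductive Formula (Ag Atom : Type) : Type
  | atom : Atom → Formula Ag Atom
  | bot : Formula Ag Atom
  | imp : Formula Ag Atom → Formula Ag Atom → Formula Ag Atom
  | K : Ag → Formula Ag Atom → Formula Ag Atom

/-- Relational (Kripke) semantics. -/
def rSat {Atom : Type} (R : Ag → W → W → Prop) (v : Atom → Set W) :
    W → Formula Ag Atom → Prop
  | w, .atom p => w ∈ v p
  | _, .bot => False
  | w, .imp φ ψ => rSat R v w φ → rSat R v w ψ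
  | w, .K a φ => ∀ w', R a w w' → rSat R v w' φ

/-- `π_a(X)`: the set of `a`-colored nodes of `X`. -/
def piN (a : Ag) (X : Set (Set W × Ag)) : Set (Set W × Ag) := {n ∈ X | n.2 = a}

/-- Simplicial semantics on the induced simplicial model `M_N`, whose
valuation is `L_N(P) = f[v(P)]`. -/
def sSat {Atom : Type} (R : Ag → W → W → Prop) (v : Atom → Set W) :
    Set (Set W × Ag) → Formula Ag Atom → Prop
  | X, .atom p => X ∈ fMap R '' v p
  | _, .bot => False
  | X, .imp φ ψ => sSat R v X φ → sSat R v X ψ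
  | X, .K a φ => ∀ Y, IsFacetOf (SN R) Y → piN a Y = piN a X → sSat R v Y φ


lemma eqCls_eq_of_mem {R : Ag → W → W → Prop} (hR : ∀ a, Equivalence (R a))
    {a : Ag} {u w : W} (h : w ∈ eqCls R a u) : eqCls R a u = eqCls R a w := by
  ext x
  exact ⟨fun hx => (hR a).trans ((hR a).symm h) hx, fun hx => (hR a).trans h hx⟩

lemma mem_fMap_self {R : Ag → W → W → Prop} (hR : ∀ a, Equivalence (R a))
    (a : Ag) (w : W) : w ∈ eqCls R a w := (hR a).refl w

lemma fMap_mem_SN {R : Ag → W → W → Prop} (hR : ∀ a, Equivalence (R a))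
    (w : W) : fMap R w ∈ SN R := by
  constructor
  · rintro n ⟨a, rfl⟩; exact ⟨w, rfl⟩
  · refine ⟨w, ?_⟩
    simp only [Set.mem_iInter]
    rintro n ⟨a, rfl⟩
    exact mem_fMap_self hR a w

lemma fMap_facet {R : Ag → W → W → Prop} (hR : ∀ a, Equivalence (R a))
    (hproper : ∀ w : W, (⋂ a : Ag, eqCls R a w) = {w})
    (w : W) : IsFacetOf (SN R) (fMap R w) := by
  refine ⟨fMap_mem_SN hR w, ?_⟩
  rintro Y ⟨hnode, x, hx⟩ hsub
  have hxall : ∀ n ∈ Y, x ∈ n.1 := by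
    intro n hn
    exact Set.mem_iInter.mp (Set.mem_iInter.mp hx n) hn
  have hxw : x = w := by
    have : x ∈ ⋂ a : Ag, eqCls R a w := by
      refine Set.mem_iInter.mpr fun a => ?_
      exact hxall _ (hsub ⟨a, rfl⟩)
    rw [hproper w] at this; exact this
  subst hxw
  apply Set.Subset.antisymm _ hsub
  intro n hn
  obtain ⟨u, hu⟩ := hnode n hn
  have hx1 : x ∈ eqCls R n.2 u := by rw [← hu]; exact hxall n hn
  refine ⟨n.2, ?_⟩
  have h2 : eqCls R n.2 u = eqCls R n.2 x := eqCls_eq_of_mem hR hx1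
  show (eqCls R n.2 x, n.2) = n
  rw [← h2, ← hu]

lemma facet_eq_fMap {R : Ag → W → W → Prop} (hR : ∀ a, Equivalence (R a))
    {X : Set (Set W × Ag)} (hX : IsFacetOf (SN R) X) :
    ∃ w, X = fMap R w := by
  obtain ⟨⟨hnode, x, hx⟩, hmax⟩ := hX
  refine ⟨x, (hmax (fMap R x) (fMap_mem_SN hR x) ?_).symm⟩
  intro n hn
  obtain ⟨u, hu⟩ := hnode n hn
  have hx1 : x ∈ n.1 := Set.mem_iInter.mp (Set.mem_iInter.mp hx n) hn
  rw [hu] at hx1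
  refine ⟨n.2, ?_⟩
  show (eqCls R n.2 x, n.2) = n
  rw [← eqCls_eq_of_mem hR hx1, ← hu]

lemma piN_fMap {R : Ag → W → W → Prop} (a : Ag) (w : W) :
    piN a (fMap R w) = {(eqCls R a w, a)} := by
  ext n
  constructor
  · rintro ⟨⟨b, rfl⟩, h2⟩
    simp only at h2; subst h2; rfl
  · rintro rfl; exact ⟨⟨a, rfl⟩, rfl⟩

lemma piN_eq_iff {R : Ag → W → W → Prop} (hR : ∀ a, Equivalence (R a))
    (a : Ag) (w w' : W) :
    piN a (fMap R w') = piN a (fMap R w) ↔ R a w w' := by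
  rw [piN_fMap, piN_fMap, Set.singleton_eq_singleton_iff, Prod.mk.injEq]
  constructor
  · rintro ⟨h, -⟩
    have : w' ∈ eqCls R a w' := (hR a).refl w'
    rw [h] at this
    exact this
  · intro h
    exact ⟨(eqCls_eq_of_mem hR h).symm, rfl⟩

/-- for a proper relational model with equivalence relations,
the translation to the induced simplicial model preserves truth:
`N,w ⊨ φ` iff `M_N, f(w) ⊨ φ`. -/
theorem relational_simplicial_truth {Atom : Type} [Finite Ag]
    (R : Ag → W → W → Prop) (hR : ∀ a, Equivalence (R a))
    (hproper : ∀ w : W, (⋂ a : Ag, eqCls R a w) = {w})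
    (v : Atom → Set W) :
    ∀ (φ : Formula Ag Atom) (w : W), rSat R v w φ ↔ sSat R v (fMap R w) φ := by
  intro φ
  induction φ with
  | atom p =>
      intro w
      constructor
      · intro h; exact ⟨w, h, rfl⟩
      · rintro ⟨w', hw', heq⟩
        have : w' ∈ ⋂ a : Ag, eqCls R a w' := by
          rw [hproper w']; rfl
        have hww : w = w' := by
          have hmem : ∀ a : Ag, w ∈ eqCls R a w' := by
            intro a
            have : (eqCls R a w, a) ∈ fMap R w' := by
              rw [heq]; exact ⟨a, rfl⟩
            obtain ⟨b, hb⟩ := this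
            have hb2 : b = a := congrArg Prod.snd hb
            subst hb2
            have h1 : eqCls R b w' = eqCls R b w := congrArg Prod.fst hb
            rw [h1]; exact (hR b).refl w
          have : w ∈ ⋂ a : Ag, eqCls R a w' := Set.mem_iInter.mpr hmem
          rw [hproper w'] at this
          exact this
        rw [hww]; exact hw'
  | bot => intro w; simp [rSat, sSat]
  | imp φ ψ ih1 ih2 =>
      intro w
      simp only [rSat, sSat]
      rw [ih1 w, ih2 w]
  | K a φ ih =>
      intro w
      constructor
      · intro h Y hY hpi
        obtain ⟨w', rfl⟩ := facet_eq_fMap hR hY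
        exact (ih w').mp (h w' ((piN_eq_iff hR a w w').mp hpi))
      · intro h w' hww'
        exact (ih w').mpr
          (h (fMap R w') (fMap_facet hR hproper w') ((piN_eq_iff hR a w w').mpr hww'))
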